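/- arXiv:2405.03297 — 2 statements merged into one kernel-verified Lean document; each statement's English description precedes it below -/
import Mathlib

section
/- Let d_1 ≥ … ≥ d_m be real numbers, let w_1,…,w_m be a basis of ℝ^m, and let 0 = n_0 < n_1 < … < n_S = m be the indices such that d_i = d_{n_s} for n_{s-1} < i ≤ n_s and d_{n_s} > d_{n_s + 1} for s < S. Fix s ∈ {1,…,S} and a positive integer t, and set A_s(t) = Σ_{i=1}^{n_s} e^{t(d_i − d_{n_s})} w_i w_iᵀ. Then for every j with n_{s-1} < j ≤ n_s, the j-th largest eigenvalue of A_s(t) satisfies α_j(A_s(t)) ≤ Σ_{i=j}^{n_s} w_iᵀ w_i. -/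
open Matrix Filter Topology

/-- The `j`-th largest eigenvalue of a symmetric (Hermitian) real matrix, `j` being
zero-based, so `j = 0` gives the largest eigenvalue.  For non-Hermitian matrices the
value is junk (`0`). -/
noncomputable def nthLargestEig {m : ℕ} (A : Matrix (Fin m) (Fin m) ℝ) (j : Fin m) : ℝ :=
  if hA : A.IsHermitian then hA.eigenvalues (Tuple.sort hA.eigenvalues j.rev) else 0

/-!
By Courant–Fischer there is a nonzero `x ⟂ w_1, …, w_{j-1}` with `α_j ‖x‖² ≤ xᵀ A_s(t) x`.
The quadratic form is `∑_{i ≤ n_s} e^{t(d_i - d_{n_s})} (w_iᵀ x)²`: the terms with `i < j` vanish,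
the remaining ones lie in the `s`-th block and so have weight `1`, and Cauchy–Schwarz bounds each
`(w_iᵀ x)²` by `‖w_i‖² ‖x‖²`.
-/

open Module
open scoped InnerProductSpace

theorem exists_ne_zero_forall_inner_eq_zero {𝕜 E : Type*} [RCLike 𝕜] [NormedAddCommGroup E]
    [InnerProductSpace 𝕜 E] [FiniteDimensional 𝕜 E] (s : Finset E) (hs : s.card < finrank 𝕜 E) :
    ∃ x ≠ (0 : E), ∀ v ∈ s, ⟪v, x⟫_𝕜 = 0 := by
  have hK : Submodule.span 𝕜 (s : Set E) ≠ ⊤ := fun h ↦ by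
    have := finrank_span_finset_le_card (R := 𝕜) s
    rw [Set.finrank, h, finrank_top] at this
    omega
  obtain ⟨x, hx, hx0⟩ := Submodule.exists_mem_ne_zero_of_ne_bot
    (mt Submodule.orthogonal_eq_bot_iff.mp hK)
  exact ⟨x, hx0, fun v hv ↦ (Submodule.mem_orthogonal _ x).1 hx v (Submodule.subset_span hv)⟩

namespace LinearMap.IsSymmetric

variable {ι E : Type*} [Fintype ι] [NormedAddCommGroup E] [InnerProductSpace ℝ E]
  {T : E →ₗ[ℝ] E}

theorem inner_apply_self_eq_sum (hT : T.IsSymmetric) (b : OrthonormalBasis ι ℝ E) {μ : ι → ℝ}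
    (hb : ∀ k, T (b k) = μ k • b k) (x : E) : ⟪x, T x⟫_ℝ = ∑ k, μ k * ⟪b k, x⟫_ℝ ^ 2 := by
  rw [← b.sum_inner_mul_inner x (T x)]
  refine Finset.sum_congr rfl fun k _ ↦ ?_
  rw [← hT, hb, real_inner_smul_left, real_inner_comm]
  ring

theorem mul_norm_sq_le_inner_apply_self (hT : T.IsSymmetric) (b : OrthonormalBasis ι ℝ E)
    {μ : ι → ℝ} (hb : ∀ k, T (b k) = μ k • b k) (c : ℝ) (x : E)
    (hx : ∀ k, μ k < c → ⟪b k, x⟫_ℝ = 0) :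
    c * ‖x‖ ^ 2 ≤ ⟪x, T x⟫_ℝ := by
  rw [hT.inner_apply_self_eq_sum b hb, ← b.sum_sq_norm_inner_right x, Finset.mul_sum]
  refine Finset.sum_le_sum fun k _ ↦ ?_
  rw [Real.norm_eq_abs, sq_abs]
  rcases lt_or_ge (μ k) c with hk | hk
  · simp [hx k hk]
  · exact mul_le_mul_of_nonneg_right hk (sq_nonneg _)

end LinearMap.IsSymmetric

theorem Matrix.IsHermitian.exists_inner_eq_zero_nthLargestEig_mul_le {m : ℕ}
    {A : Matrix (Fin m) (Fin m) ℝ} (hA : A.IsHermitian) (j : Fin m)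
    (v : Fin m → EuclideanSpace ℝ (Fin m)) :
    ∃ x ≠ 0, (∀ i < j, ⟪v i, x⟫_ℝ = 0) ∧
      nthLargestEig A j * ‖x‖ ^ 2 ≤ ⟪x, toEuclideanLin A x⟫_ℝ := by
  set σ := Tuple.sort hA.eigenvalues
  set b := hA.eigenvectorBasis
  -- `x` is orthogonal to the `j` vectors `v i` and to the eigenvectors of the `m - 1 - j`
  -- smallest eigenvalues, which leaves room because `j + (m - 1 - j) < m`.
  obtain ⟨x, hx0, hx⟩ := exists_ne_zero_forall_inner_eq_zero (𝕜 := ℝ)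
    ((Finset.Iio j).image v ∪ (Finset.Iio j.rev).image (b ∘ σ)) <| by
      calc _ ≤ (Finset.Iio j).card + (Finset.Iio j.rev).card :=
            (Finset.card_union_le _ _).trans (add_le_add Finset.card_image_le Finset.card_image_le)
        _ < finrank ℝ (EuclideanSpace ℝ (Fin m)) := by
            simp only [Fin.card_Iio, Fin.val_rev, finrank_euclideanSpace_fin]
            omega
  refine ⟨x, hx0, fun i hi ↦
    hx _ (Finset.mem_union_left _ (Finset.mem_image_of_mem v (Finset.mem_Iio.2 hi))), ?_⟩
  rw [nthLargestEig, dif_pos hA]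
  refine (isSymmetric_toEuclideanLin_iff.2 hA).mul_norm_sq_le_inner_apply_self b
    (μ := hA.eigenvalues) (fun k ↦ ?_) _ x fun k hk ↦ hx _ ?_
  · ext1
    simp [b, hA.mulVec_eigenvectorBasis]
  · -- an eigenvalue below `λ (σ j.rev)` sits at a sorted position before `j.rev`
    have hσk : σ.symm k < j.rev := lt_of_not_ge fun h ↦ hk.not_ge <| by
      simpa [σ] using Tuple.monotone_sort hA.eigenvalues h
    exact Finset.mem_union_right _ (Finset.mem_image.2 ⟨σ.symm k, by simpa using hσk, by simp⟩)

theorem Matrix.isHermitian_sum_smul_vecMulVec {ι n : Type*} (s : Finset ι) (c : ι → ℝ)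
    (w : ι → n → ℝ) : (∑ i ∈ s, c i • vecMulVec (w i) (w i)).IsHermitian :=
  isSelfAdjoint_sum s fun i _ ↦ by
    simp [IsSelfAdjoint, star_eq_conjTranspose]

theorem Matrix.inner_toEuclideanLin_sum_smul_vecMulVec {ι n : Type*} [Fintype n]
    [DecidableEq n] (s : Finset ι) (c : ι → ℝ) (w : ι → n → ℝ) (x : EuclideanSpace ℝ n) :
    ⟪x, toEuclideanLin (∑ i ∈ s, c i • vecMulVec (w i) (w i)) x⟫_ℝ =
      ∑ i ∈ s, c i * ⟪WithLp.toLp 2 (w i), x⟫_ℝ ^ 2 := by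
  simp [EuclideanSpace.inner_eq_star_dotProduct, vecMulVec_mulVec, dotProduct_sum,
    dotProduct_smul, dotProduct_comm, sq]

theorem nthLargestEig_sum_smul_vecMulVec_le {m : ℕ} (T : Finset (Fin m)) (c : Fin m → ℝ)
    (w : Fin m → Fin m → ℝ) (j : Fin m) (hc : ∀ i ∈ T, j ≤ i → 0 ≤ c i) :
    nthLargestEig (∑ i ∈ T, c i • vecMulVec (w i) (w i)) j ≤
      ∑ i ∈ T with j ≤ i, c i * ∑ k, w i k ^ 2 := by
  set v : Fin m → EuclideanSpace ℝ (Fin m) := fun i ↦ WithLp.toLp 2 (w i)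
  obtain ⟨x, hx0, hxv, hx⟩ :=
    (isHermitian_sum_smul_vecMulVec T c w).exists_inner_eq_zero_nthLargestEig_mul_le j v
  have hsupp : ∑ i ∈ T, c i * ⟪v i, x⟫_ℝ ^ 2 = ∑ i ∈ T with j ≤ i, c i * ⟪v i, x⟫_ℝ ^ 2 :=
    (Finset.sum_filter_of_ne fun i _ hi ↦ not_lt.1 fun hij ↦ hi (by rw [hxv i hij]; ring)).symm
  rw [inner_toEuclideanLin_sum_smul_vecMulVec, hsupp] at hx
  refine le_of_mul_le_mul_right (hx.trans ?_) (by positivity)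
  rw [Finset.sum_mul]
  refine Finset.sum_le_sum fun i hi ↦ ?_
  rw [Finset.mem_filter] at hi
  have hcs : ⟪v i, x⟫_ℝ ^ 2 ≤ (∑ k, w i k ^ 2) * ‖x‖ ^ 2 := by
    rw [← EuclideanSpace.real_norm_sq_eq (v i), ← mul_pow]
    exact (sq_abs _).ge.trans (pow_le_pow_left₀ (abs_nonneg _) (abs_real_inner_le_norm _ _) 2)
  rw [mul_assoc]
  exact mul_le_mul_of_nonneg_left hcs (hc i hi.1 hi.2)

theorem stmt10_general {m S : ℕ}
    (d : Fin m → ℝ)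
    (w : Fin m → (Fin m → ℝ))
    (n : ℕ → ℕ)
    -- `Dv s` is the common value `d (n s)` of `d` on the `s`-th block:
    (Dv : ℕ → ℝ)
    (hDv : ∀ s, 1 ≤ s → s ≤ S → ∀ i : Fin m, n (s - 1) ≤ (i : ℕ) → (i : ℕ) < n s → d i = Dv s)
    (s : ℕ) (hs1 : 1 ≤ s) (hsS : s ≤ S) (t : ℕ)
    (A : Matrix (Fin m) (Fin m) ℝ)
    (hA : A = ∑ i ∈ Finset.univ.filter (fun i : Fin m => (i : ℕ) < n s),
      Real.exp ((t : ℝ) * (d i - Dv s)) • Matrix.vecMulVec (w i) (w i)) :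
    ∀ j : Fin m, n (s - 1) ≤ (j : ℕ) → (j : ℕ) < n s →
      nthLargestEig A j ≤
        ∑ i ∈ Finset.univ.filter (fun i : Fin m => (j : ℕ) ≤ (i : ℕ) ∧ (i : ℕ) < n s),
          ∑ k, w i k ^ 2 := by
  intro j hj _
  subst hA
  refine (nthLargestEig_sum_smul_vecMulVec_le _ _ w j fun i _ _ ↦
    (Real.exp_pos _).le).trans_eq ?_
  rw [Finset.filter_filter]
  refine Finset.sum_congr (by simp only [and_comm, Fin.le_def]) fun i hi ↦ ?_
  obtain ⟨-, hji, his⟩ := Finset.mem_filter.1 hi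
  rw [hDv s hs1 hsS i (hj.trans hji) his, sub_self, mul_zero, Real.exp_zero, one_mul]

/-- With `d`, `w` and the block structure `n`, `Dv` as in the paper
(1-based indices there translated to 0-based `Fin m` indices here), for fixed
`s ∈ {1,…,S}` and a positive integer `t`, set
`A_s(t) = ∑_{i < n s} exp (t (d i - d (n s))) • w i w iᵀ`.  Then for every `j` in the
`s`-th block, the `j`-th largest eigenvalue of `A_s(t)` satisfies
`α_j (A_s(t)) ≤ ∑_{j ≤ i < n s} wᵢᵀ wᵢ`. -/
theorem stmt10 {m S : ℕ} (hm : 0 < m)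
    -- `d 0 ≥ … ≥ d (m-1)`:
    (d : Fin m → ℝ) (hd : Antitone d)
    -- `w` is a basis of `ℝ^m`:
    (w : Fin m → (Fin m → ℝ)) (hw : LinearIndependent ℝ w)
    -- block structure `0 = n 0 < n 1 < … < n S = m` of the level sets of `d`:
    (n : ℕ → ℕ) (hn0 : n 0 = 0) (hnS : n S = m)
    (hmono : ∀ s, s < S → n s < n (s + 1))
    -- `Dv s` is the common value `d (n s)` of `d` on the `s`-th block:
    (Dv : ℕ → ℝ)
    (hDv : ∀ s, 1 ≤ s → s ≤ S → ∀ i : Fin m, n (s - 1) ≤ (i : ℕ) → (i : ℕ) < n s → d i = Dv s)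
    -- `d (n s) > d (n s + 1)`, i.e. the blocks are maximal:
    (hdrop : ∀ s, 1 ≤ s → s < S → Dv (s + 1) < Dv s)
    (s : ℕ) (hs1 : 1 ≤ s) (hsS : s ≤ S) (t : ℕ) (ht : 1 ≤ t)
    (A : Matrix (Fin m) (Fin m) ℝ)
    (hA : A = ∑ i ∈ Finset.univ.filter (fun i : Fin m => (i : ℕ) < n s),
      Real.exp ((t : ℝ) * (d i - Dv s)) • Matrix.vecMulVec (w i) (w i)) :
    ∀ j : Fin m, n (s - 1) ≤ (j : ℕ) → (j : ℕ) < n s →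
      nthLargestEig A j ≤
        ∑ i ∈ Finset.univ.filter (fun i : Fin m => (j : ℕ) ≤ (i : ℕ) ∧ (i : ℕ) < n s),
          ∑ k, w i k ^ 2 :=
  stmt10_general d w n Dv hDv s hs1 hsS t A hA
end

section
/- Let d_1 ≥ … ≥ d_m be real numbers, let w_1,…,w_m be a basis of ℝ^m, and let 0 = n_0 < n_1 < … < n_S = m be the indices such that d_i = d_{n_s} for n_{s-1} < i ≤ n_s and d_{n_s} > d_{n_s + 1} for s < S. Fix s ∈ {1,…,S} and a positive integer t, and set A_s(t) = Σ_{i=1}^{n_s} e^{t(d_i − d_{n_s})} w_i w_iᵀ, B_s(t) = Σ_{i=n_s+1}^{m} e^{t(d_i − d_{n_s})} w_i w_iᵀ, and C_s = Σ_{i=1}^{n_s} w_i w_iᵀ. Then for every j with n_{s-1} < j ≤ n_s: (i) α_j(C_s) > 0, and (ii) α_j(C_s) + α_m(B_s(t)) ≤ α_j(A_s(t) + B_s(t)) ≤ Σ_{i=j}^{n_s} w_iᵀ w_i + α_1(B_s(t)). -/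
open Matrix Filter Topology

/-!
Everything rests on the Courant–Fischer principle for `α_j`: if the quadratic form `xᵀMx` is
`≥ c ‖x‖²` on a subspace of dimension `j` then `α_j(M) ≥ c`, and if it is `≤ c ‖x‖²` on a
subspace of dimension `m - j + 1` then `α_j(M) ≤ c`; both follow by intersecting that subspace
with a span of eigenvectors sorted by eigenvalue.

For the lower bound in (ii), the top `j` eigenvectors of `C_s` give a `j`-dimensional subspace on
which `xᵀA_s x ≥ xᵀC_s x ≥ α_j(C_s) ‖x‖²`, since every weight of `A_s` is at least `1`, while
`xᵀB_s x ≥ α_m(B_s) ‖x‖²` everywhere. For the upper bound, on the orthogonal complement of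
`w_1, …, w_{j-1}` only the terms `i ≥ j` of `A_s` survive, and these lie in the `s`-th block,
where the weights are `1`; Cauchy–Schwarz then bounds `xᵀA_s x` by `Σ_{i=j}^{n_s} ‖w_i‖² ‖x‖²`.
For (i), if `α_j(C_s) ≤ 0` then the `(m - j + 1)`-dimensional subspace where `xᵀC_s x ≤ 0` meets
the `n_s`-dimensional span of `w_1, …, w_{n_s}` in a nonzero vector, which is orthogonal to every
`w_i` spanning it, a contradiction.
-/

open Finset Submodule Module

lemma Submodule.exists_mem_ne_zero_of_finrank_lt_add {K V : Type*} [DivisionRing K]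
    [AddCommGroup V] [Module K V] [FiniteDimensional K V] {U W : Submodule K V}
    (h : finrank K V < finrank K U + finrank K W) : ∃ x ∈ U, x ∈ W ∧ x ≠ 0 := by
  by_contra! hUW
  exact h.not_ge (finrank_add_finrank_le_of_disjoint (disjoint_def.mpr hUW))

namespace Matrix

section Gram

variable {ι n : Type*} (w : ι → n → ℝ)

lemma isHermitian_sum_smul_vecMulVec_s11 (s : Finset ι) (c : ι → ℝ) :
    (∑ i ∈ s, c i • vecMulVec (w i) (w i)).IsHermitian := by
  simp [IsHermitian, transpose_sum, transpose_smul, transpose_vecMulVec]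

lemma isHermitian_sum_vecMulVec (s : Finset ι) :
    (∑ i ∈ s, vecMulVec (w i) (w i)).IsHermitian := by
  simpa using isHermitian_sum_smul_vecMulVec_s11 w s 1

variable [Fintype n]

lemma dotProduct_sum_smul_vecMulVec_mulVec (s : Finset ι) (c : ι → ℝ) (x : n → ℝ) :
    x ⬝ᵥ (∑ i ∈ s, c i • vecMulVec (w i) (w i)) *ᵥ x = ∑ i ∈ s, c i * (w i ⬝ᵥ x) ^ 2 := by
  rw [sum_mulVec, dotProduct_sum]
  refine sum_congr rfl fun i _ => ?_
  rw [smul_mulVec, vecMulVec_mulVec, dotProduct_smul, dotProduct_smul, op_smul_eq_mul,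
    smul_eq_mul, dotProduct_comm x]
  ring

lemma dotProduct_sum_vecMulVec_mulVec (s : Finset ι) (x : n → ℝ) :
    x ⬝ᵥ (∑ i ∈ s, vecMulVec (w i) (w i)) *ᵥ x = ∑ i ∈ s, (w i ⬝ᵥ x) ^ 2 := by
  simpa using dotProduct_sum_smul_vecMulVec_mulVec w s 1 x

lemma dotProduct_sum_vecMulVec_mulVec_le_of_one_le {s : Finset ι} {c : ι → ℝ}
    (hc : ∀ i ∈ s, 1 ≤ c i) (x : n → ℝ) :
    x ⬝ᵥ (∑ i ∈ s, vecMulVec (w i) (w i)) *ᵥ x ≤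
      x ⬝ᵥ (∑ i ∈ s, c i • vecMulVec (w i) (w i)) *ᵥ x := by
  rw [dotProduct_sum_vecMulVec_mulVec, dotProduct_sum_smul_vecMulVec_mulVec]
  exact sum_le_sum fun i hi => le_mul_of_one_le_left (sq_nonneg _) (hc i hi)

lemma dotProduct_sum_smul_vecMulVec_mulVec_le_of_subset {s t : Finset ι} (hts : t ⊆ s) {c : ι → ℝ}
    (hc : ∀ i ∈ t, c i = 1) {x : n → ℝ} (hx : ∀ i ∈ s, i ∉ t → w i ⬝ᵥ x = 0) :
    x ⬝ᵥ (∑ i ∈ s, c i • vecMulVec (w i) (w i)) *ᵥ x ≤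
      (∑ i ∈ t, ∑ k, w i k ^ 2) * (x ⬝ᵥ x) := by
  rw [dotProduct_sum_smul_vecMulVec_mulVec,
    ← sum_subset hts fun i hi hit => by simp [hx i hi hit], sum_mul]
  refine sum_le_sum fun i hi => ?_
  rw [hc i hi, one_mul]
  simpa [dotProduct, sq] using sum_mul_sq_le_sq_mul_sq univ (w i) x

lemma exists_le_finrank_add_forall_dotProduct_eq_zero {κ : Type*} [Fintype κ]
    (u : κ → n → ℝ) :
    ∃ V : Submodule ℝ (n → ℝ), Fintype.card n ≤ finrank ℝ V + Fintype.card κ ∧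
      ∀ x ∈ V, ∀ i, u i ⬝ᵥ x = 0 := by
  refine ⟨LinearMap.ker (of u).mulVecLin, ?_, fun x hx i => congrFun hx i⟩
  have hrank := (of u).mulVecLin.finrank_range_add_finrank_ker
  have hrange := Submodule.finrank_le (LinearMap.range (of u).mulVecLin)
  rw [finrank_fintype_fun_eq_card] at hrank hrange
  omega

lemma eq_zero_of_mem_span_of_forall_dotProduct_eq_zero {κ : Type*} {u : κ → n → ℝ}
    {x : n → ℝ} (hx : x ∈ span ℝ (Set.range u)) (h : ∀ i, u i ⬝ᵥ x = 0) : x = 0 := by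
  have : span ℝ (Set.range u) ≤ LinearMap.ker ((dotProductBilin ℝ ℝ).flip x) := by
    rw [span_le]
    rintro _ ⟨i, rfl⟩
    exact h i
  simpa using this hx

end Gram

namespace IsHermitian

section Eigenvectors

variable {n : Type*} [Fintype n] [DecidableEq n] {A : Matrix n n ℝ} (hA : A.IsHermitian)

lemma eigenvectorBasis_dotProduct (i j : n) :
    ⇑(hA.eigenvectorBasis i) ⬝ᵥ ⇑(hA.eigenvectorBasis j) = if i = j then 1 else 0 := by
  rw [← orthonormal_iff_ite.mp hA.eigenvectorBasis.orthonormal i j,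
    EuclideanSpace.inner_eq_star_dotProduct, dotProduct_comm]
  rfl

lemma sum_dotProduct_smul_eigenvectorBasis (x : n → ℝ) :
    ∑ i, (⇑(hA.eigenvectorBasis i) ⬝ᵥ x) • ⇑(hA.eigenvectorBasis i) = x := by
  have := congrArg WithLp.ofLp (hA.eigenvectorBasis.sum_repr' (WithLp.toLp 2 x))
  simpa [EuclideanSpace.inner_eq_star_dotProduct, dotProduct_comm] using this

lemma dotProduct_self_eq_sum (x : n → ℝ) :
    x ⬝ᵥ x = ∑ i, (⇑(hA.eigenvectorBasis i) ⬝ᵥ x) ^ 2 := by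
  nth_rewrite 1 [← hA.sum_dotProduct_smul_eigenvectorBasis x]
  simp only [sum_dotProduct, smul_dotProduct, smul_eq_mul, sq]

lemma dotProduct_mulVec_eq_sum (x : n → ℝ) :
    x ⬝ᵥ A *ᵥ x = ∑ i, hA.eigenvalues i * (⇑(hA.eigenvectorBasis i) ⬝ᵥ x) ^ 2 := by
  nth_rewrite 2 [← hA.sum_dotProduct_smul_eigenvectorBasis x]
  rw [mulVec_sum, dotProduct_sum]
  refine sum_congr rfl fun i _ => ?_
  rw [mulVec_smul, mulVec_eigenvectorBasis, dotProduct_smul, dotProduct_smul, smul_eq_mul,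
    smul_eq_mul, dotProduct_comm x]
  ring

lemma dotProduct_mulVec_le_of_forall {x : n → ℝ} {c : ℝ}
    (hc : ∀ i, ⇑(hA.eigenvectorBasis i) ⬝ᵥ x ≠ 0 → hA.eigenvalues i ≤ c) :
    x ⬝ᵥ A *ᵥ x ≤ c * (x ⬝ᵥ x) := by
  rw [hA.dotProduct_mulVec_eq_sum, hA.dotProduct_self_eq_sum, mul_sum]
  refine sum_le_sum fun i _ => ?_
  by_cases hi : ⇑(hA.eigenvectorBasis i) ⬝ᵥ x = 0
  · simp [hi]
  · exact mul_le_mul_of_nonneg_right (hc i hi) (sq_nonneg _)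

lemma le_dotProduct_mulVec_of_forall {x : n → ℝ} {c : ℝ}
    (hc : ∀ i, ⇑(hA.eigenvectorBasis i) ⬝ᵥ x ≠ 0 → c ≤ hA.eigenvalues i) :
    c * (x ⬝ᵥ x) ≤ x ⬝ᵥ A *ᵥ x := by
  rw [hA.dotProduct_mulVec_eq_sum, hA.dotProduct_self_eq_sum, mul_sum]
  refine sum_le_sum fun i _ => ?_
  by_cases hi : ⇑(hA.eigenvectorBasis i) ⬝ᵥ x = 0
  · simp [hi]
  · exact mul_le_mul_of_nonneg_right (hc i hi) (sq_nonneg _)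

lemma mem_of_dotProduct_eigenvectorBasis_ne_zero {s : Finset n} {x : n → ℝ}
    (hx : x ∈ span ℝ (Set.range fun i : s => ⇑(hA.eigenvectorBasis i))) {i : n}
    (hi : ⇑(hA.eigenvectorBasis i) ⬝ᵥ x ≠ 0) : i ∈ s := by
  by_contra his
  have : span ℝ (Set.range fun i : s => ⇑(hA.eigenvectorBasis i)) ≤
      LinearMap.ker (dotProductBilin ℝ ℝ ⇑(hA.eigenvectorBasis i)) := by
    rw [span_le]
    rintro _ ⟨k, rfl⟩
    simp [eigenvectorBasis_dotProduct, (ne_of_mem_of_not_mem k.2 his).symm]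
  exact hi (by simpa using this hx)

lemma finrank_span_eigenvectorBasis (s : Finset n) :
    finrank ℝ (span ℝ (Set.range fun i : s => ⇑(hA.eigenvectorBasis i))) = #s := by
  have hli : LinearIndependent ℝ fun i => ⇑(hA.eigenvectorBasis i) :=
    hA.eigenvectorBasis.toBasis.linearIndependent.map'
      (WithLp.linearEquiv 2 ℝ (n → ℝ)).toLinearMap (WithLp.linearEquiv 2 ℝ (n → ℝ)).ker
  exact (finrank_span_eq_card (hli.comp _ Subtype.val_injective)).trans (Fintype.card_coe s)

end Eigenvectors

variable {m : ℕ} {A B C : Matrix (Fin m) (Fin m) ℝ}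

lemma nthLargestEig_eq (hA : A.IsHermitian) (j : Fin m) :
    nthLargestEig A j = hA.eigenvalues (Tuple.sort hA.eigenvalues j.rev) :=
  dif_pos hA

lemma eigenvalues_le_nthLargestEig (hA : A.IsHermitian) {i j : Fin m}
    (h : (Tuple.sort hA.eigenvalues).symm i ≤ j.rev) : hA.eigenvalues i ≤ nthLargestEig A j := by
  simpa [hA.nthLargestEig_eq] using Tuple.monotone_sort hA.eigenvalues h

lemma nthLargestEig_le_eigenvalues (hA : A.IsHermitian) {i j : Fin m}
    (h : j.rev ≤ (Tuple.sort hA.eigenvalues).symm i) : nthLargestEig A j ≤ hA.eigenvalues i := by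
  simpa [hA.nthLargestEig_eq] using Tuple.monotone_sort hA.eigenvalues h

lemma exists_finrank_eq_forall_dotProduct_mulVec_le (hA : A.IsHermitian) (j : Fin m) :
    ∃ V : Submodule ℝ (Fin m → ℝ), finrank ℝ V = m - j ∧
      ∀ x ∈ V, x ⬝ᵥ A *ᵥ x ≤ nthLargestEig A j * (x ⬝ᵥ x) := by
  set s := (Iic j.rev).map (Tuple.sort hA.eigenvalues).toEmbedding
  refine ⟨span ℝ (Set.range fun i : s => ⇑(hA.eigenvectorBasis i)), ?_, fun x hx => ?_⟩
  · rw [hA.finrank_span_eigenvectorBasis, card_map, Fin.card_Iic, Fin.val_rev]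
    omega
  · refine hA.dotProduct_mulVec_le_of_forall fun i hi => hA.eigenvalues_le_nthLargestEig ?_
    simpa [s, mem_map_equiv] using hA.mem_of_dotProduct_eigenvectorBasis_ne_zero hx hi

lemma exists_finrank_eq_forall_le_dotProduct_mulVec (hA : A.IsHermitian) (j : Fin m) :
    ∃ V : Submodule ℝ (Fin m → ℝ), finrank ℝ V = j + 1 ∧
      ∀ x ∈ V, nthLargestEig A j * (x ⬝ᵥ x) ≤ x ⬝ᵥ A *ᵥ x := by
  set s := (Ici j.rev).map (Tuple.sort hA.eigenvalues).toEmbedding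
  refine ⟨span ℝ (Set.range fun i : s => ⇑(hA.eigenvectorBasis i)), ?_, fun x hx => ?_⟩
  · rw [hA.finrank_span_eigenvectorBasis, card_map, Fin.card_Ici, Fin.val_rev]
    omega
  · refine hA.le_dotProduct_mulVec_of_forall fun i hi => hA.nthLargestEig_le_eigenvalues ?_
    simpa [s, mem_map_equiv] using hA.mem_of_dotProduct_eigenvectorBasis_ne_zero hx hi

lemma le_nthLargestEig_of_lt_finrank (hA : A.IsHermitian) {j : Fin m}
    {V : Submodule ℝ (Fin m → ℝ)} (hV : (j : ℕ) < finrank ℝ V) {c : ℝ}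
    (hc : ∀ x ∈ V, c * (x ⬝ᵥ x) ≤ x ⬝ᵥ A *ᵥ x) : c ≤ nthLargestEig A j := by
  obtain ⟨W, hW, hWA⟩ := hA.exists_finrank_eq_forall_dotProduct_mulVec_le j
  obtain ⟨x, hxV, hxW, hx⟩ := exists_mem_ne_zero_of_finrank_lt_add (U := V) (W := W)
    (by rw [finrank_fin_fun, hW]; omega)
  have hpos : 0 < x ⬝ᵥ x := by simpa using dotProduct_self_star_pos_iff.mpr hx
  exact le_of_mul_le_mul_right ((hc x hxV).trans (hWA x hxW)) hpos

lemma nthLargestEig_le_of_le_finrank_add (hA : A.IsHermitian) {j : Fin m}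
    {V : Submodule ℝ (Fin m → ℝ)} (hV : m ≤ finrank ℝ V + j) {c : ℝ}
    (hc : ∀ x ∈ V, x ⬝ᵥ A *ᵥ x ≤ c * (x ⬝ᵥ x)) : nthLargestEig A j ≤ c := by
  obtain ⟨W, hW, hWA⟩ := hA.exists_finrank_eq_forall_le_dotProduct_mulVec j
  obtain ⟨x, hxV, hxW, hx⟩ := exists_mem_ne_zero_of_finrank_lt_add (U := V) (W := W)
    (by rw [finrank_fin_fun, hW]; omega)
  have hpos : 0 < x ⬝ᵥ x := by simpa using dotProduct_self_star_pos_iff.mpr hx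
  exact le_of_mul_le_mul_right ((hWA x hxW).trans (hc x hxV)) hpos

lemma nthLargestEig_last_mul_le (hA : A.IsHermitian) (hm : 0 < m) (x : Fin m → ℝ) :
    nthLargestEig A ⟨m - 1, by omega⟩ * (x ⬝ᵥ x) ≤ x ⬝ᵥ A *ᵥ x :=
  hA.le_dotProduct_mulVec_of_forall fun _ _ =>
    hA.nthLargestEig_le_eigenvalues (by rw [Fin.le_def, Fin.val_rev, Fin.val_mk]; omega)

lemma dotProduct_mulVec_le_nthLargestEig_zero_mul (hA : A.IsHermitian) (hm : 0 < m)
    (x : Fin m → ℝ) : x ⬝ᵥ A *ᵥ x ≤ nthLargestEig A ⟨0, hm⟩ * (x ⬝ᵥ x) :=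
  hA.dotProduct_mulVec_le_of_forall fun _ _ =>
    hA.eigenvalues_le_nthLargestEig
      (by rw [Fin.le_def, Fin.val_rev, Fin.val_mk]; exact Nat.le_sub_one_of_lt (Fin.is_lt _))

lemma nthLargestEig_add_nthLargestEig_last_le (hA : A.IsHermitian) (hB : B.IsHermitian)
    (hC : C.IsHermitian) (hm : 0 < m) (hCA : ∀ x, x ⬝ᵥ C *ᵥ x ≤ x ⬝ᵥ A *ᵥ x) (j : Fin m) :
    nthLargestEig C j + nthLargestEig B ⟨m - 1, by omega⟩ ≤ nthLargestEig (A + B) j := by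
  obtain ⟨V, hV, hVC⟩ := hC.exists_finrank_eq_forall_le_dotProduct_mulVec j
  refine (hA.add hB).le_nthLargestEig_of_lt_finrank (V := V) (by omega) fun x hx => ?_
  rw [add_mul, add_mulVec, dotProduct_add]
  exact add_le_add ((hVC x hx).trans (hCA x)) (hB.nthLargestEig_last_mul_le hm x)

lemma nthLargestEig_add_le (hA : A.IsHermitian) (hB : B.IsHermitian) (hm : 0 < m) {j : Fin m}
    {V : Submodule ℝ (Fin m → ℝ)} (hV : m ≤ finrank ℝ V + j) {c : ℝ}
    (hc : ∀ x ∈ V, x ⬝ᵥ A *ᵥ x ≤ c * (x ⬝ᵥ x)) :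
    nthLargestEig (A + B) j ≤ c + nthLargestEig B ⟨0, hm⟩ := by
  refine (hA.add hB).nthLargestEig_le_of_le_finrank_add hV fun x hx => ?_
  rw [add_mul, add_mulVec, dotProduct_add]
  exact add_le_add (hc x hx) (hB.dotProduct_mulVec_le_nthLargestEig_zero_mul hm x)

end IsHermitian

end Matrix

lemma nthLargestEig_sum_vecMulVec_pos {m : ℕ} {ι : Type*} {w : ι → Fin m → ℝ} {s : Finset ι}
    (hw : LinearIndependent ℝ fun i : s => w i) {j : Fin m} (hj : (j : ℕ) < #s) :
    0 < nthLargestEig (∑ i ∈ s, vecMulVec (w i) (w i)) j := by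
  obtain ⟨V, hV, hVC⟩ :=
    (isHermitian_sum_vecMulVec w s).exists_finrank_eq_forall_dotProduct_mulVec_le j
  obtain ⟨x, hxV, hxW, hx⟩ := exists_mem_ne_zero_of_finrank_lt_add (U := V)
    (W := span ℝ (Set.range fun i : s => w i))
    (by rw [finrank_fin_fun, hV, finrank_span_eq_card hw, Fintype.card_coe]; omega)
  by_contra! hle
  have hsum : ∑ i ∈ s, (w i ⬝ᵥ x) ^ 2 ≤ 0 := by
    rw [← dotProduct_sum_vecMulVec_mulVec]
    exact (hVC x hxV).trans (mul_nonpos_of_nonpos_of_nonneg hle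
      (by simpa using dotProduct_self_star_nonneg x))
  have horth : ∀ i ∈ s, w i ⬝ᵥ x = 0 := fun i hi =>
    pow_eq_zero_iff two_ne_zero |>.mp <|
      (sum_eq_zero_iff_of_nonneg fun _ _ => sq_nonneg _).mp (hsum.antisymm (by positivity)) i hi
  exact hx (eq_zero_of_mem_span_of_forall_dotProduct_eq_zero hxW fun i => horth i i.2)

/-- With `d`, `w` and the block structure `n`, `Dv` as in the paper
(1-based indices translated to 0-based `Fin m` indices), for fixed `s ∈ {1,…,S}` and a
positive integer `t`, set `A_s(t) = ∑_{i < n s} exp (t (d i - d (n s))) • w i w iᵀ`,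
`B_s(t) = ∑_{n s ≤ i} exp (t (d i - d (n s))) • w i w iᵀ` and
`C_s = ∑_{i < n s} w i w iᵀ`.  Then for every `j` in the `s`-th block:
(i) `α_j (C_s) > 0`, and
(ii) `α_j (C_s) + α_m (B_s(t)) ≤ α_j (A_s(t) + B_s(t)) ≤ ∑_{j ≤ i < n s} wᵢᵀ wᵢ + α_1 (B_s(t))`. -/
theorem stmt11 {m S : ℕ} (hm : 0 < m)
    -- `d 0 ≥ … ≥ d (m-1)`:
    (d : Fin m → ℝ) (hd : Antitone d)
    -- `w` is a basis of `ℝ^m`: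
    (w : Fin m → (Fin m → ℝ)) (hw : LinearIndependent ℝ w)
    -- block structure `0 = n 0 < n 1 < … < n S = m` of the level sets of `d`:
    (n : ℕ → ℕ)
    -- `Dv s` is the common value `d (n s)` of `d` on the `s`-th block:
    (Dv : ℕ → ℝ)
    (hDv : ∀ s, 1 ≤ s → s ≤ S → ∀ i : Fin m, n (s - 1) ≤ (i : ℕ) → (i : ℕ) < n s → d i = Dv s)
    (s : ℕ) (hs1 : 1 ≤ s) (hsS : s ≤ S) (t : ℕ)
    (A B C : Matrix (Fin m) (Fin m) ℝ)
    (hA : A = ∑ i ∈ Finset.univ.filter (fun i : Fin m => (i : ℕ) < n s),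
      Real.exp ((t : ℝ) * (d i - Dv s)) • Matrix.vecMulVec (w i) (w i))
    (hB : B = ∑ i ∈ Finset.univ.filter (fun i : Fin m => n s ≤ (i : ℕ)),
      Real.exp ((t : ℝ) * (d i - Dv s)) • Matrix.vecMulVec (w i) (w i))
    (hC : C = ∑ i ∈ Finset.univ.filter (fun i : Fin m => (i : ℕ) < n s),
      Matrix.vecMulVec (w i) (w i)) :
    ∀ j : Fin m, n (s - 1) ≤ (j : ℕ) → (j : ℕ) < n s →
      0 < nthLargestEig C j ∧
      nthLargestEig C j + nthLargestEig B ⟨m - 1, by omega⟩ ≤ nthLargestEig (A + B) j ∧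
      nthLargestEig (A + B) j ≤
        (∑ i ∈ Finset.univ.filter (fun i : Fin m => (j : ℕ) ≤ (i : ℕ) ∧ (i : ℕ) < n s),
          ∑ k, w i k ^ 2) + nthLargestEig B ⟨0, hm⟩ := by
  intro j hj hjs
  have hblock : ∀ i : Fin m, j ≤ i → (i : ℕ) < n s → d i = Dv s :=
    fun i hji his => hDv s hs1 hsS i (hj.trans hji) his
  have hDv_le : ∀ i : Fin m, (i : ℕ) < n s → Dv s ≤ d i := fun i his =>
    (le_total i j).elim (fun h => hblock j le_rfl hjs ▸ hd h) fun h => (hblock i h his).ge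
  have hA' : A.IsHermitian := hA ▸ isHermitian_sum_smul_vecMulVec_s11 w _ _
  have hB' : B.IsHermitian := hB ▸ isHermitian_sum_smul_vecMulVec_s11 w _ _
  have hC' : C.IsHermitian := hC ▸ isHermitian_sum_vecMulVec w _
  refine ⟨?_, ?_, ?_⟩
  · rw [hC]
    refine nthLargestEig_sum_vecMulVec_pos (hw.comp _ Subtype.val_injective) ?_
    rw [Fin.card_filter_val_lt]
    omega
  · refine hA'.nthLargestEig_add_nthLargestEig_last_le hB' hC' hm (fun x => ?_) j
    rw [hA, hC]
    refine dotProduct_sum_vecMulVec_mulVec_le_of_one_le w (fun i hi => Real.one_le_exp ?_) x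
    exact mul_nonneg t.cast_nonneg (sub_nonneg.mpr (hDv_le i (by simpa using hi)))
  · obtain ⟨V, hV, hVw⟩ :=
      exists_le_finrank_add_forall_dotProduct_eq_zero fun k : Fin j => w (Fin.castLE j.isLt.le k)
    refine hA'.nthLargestEig_add_le hB' hm (V := V) (by simpa using hV) fun x hx => ?_
    rw [hA]
    refine dotProduct_sum_smul_vecMulVec_mulVec_le_of_subset w (fun i => by simp_all)
      (fun i hi => ?_) fun i hi hij => hVw x hx ⟨i, ?_⟩
    · simp only [mem_filter, mem_univ, true_and] at hi
      rw [hblock i hi.1 hi.2, sub_self, mul_zero, Real.exp_zero]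
    · simp only [mem_filter, mem_univ, true_and, not_and] at hi hij
      exact Nat.lt_of_not_le fun h => hij h hi
end
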